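/- Let 𝒢 ∈ CC₁ with consecutive clique enumeration 𝒞₁,...,𝒞ₙ, let all vertex groups Γ_v be infinite, and let Γ = 𝒢{Γ_v}. Suppose g ∈ Γ_{𝒞_{i-1} Δ 𝒞ᵢ} and h ∈ Γ_{𝒞ᵢ Δ 𝒞_{i+1}} satisfy gh ∈ Γ_{𝒱 ∖ 𝒞ᵢ^int}. Then there exist a ∈ Γ_{(𝒞_{i-1}∖𝒞_{i-1,i}) ∪ 𝒞_{i,i+1}}, s ∈ Γ_{𝒞ᵢ^int}, and b ∈ Γ_{(𝒞_{i+1}∖𝒞_{i,i+1}) ∪ 𝒞_{i-1,i}} such that g = as and h = s⁻¹b. -/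

import Mathlib

open Monoid

variable {V : Type*}

/-- Defining relators of a graph product: commutators of elements of adjacent vertex groups. -/
def graphProdRels (G : SimpleGraph V) (Γ : V → Type*) [∀ v, Group (Γ v)] :
    Set (Monoid.CoprodI Γ) :=
  {x | ∃ (u w : V) (a : Γ u) (b : Γ w), G.Adj u w ∧
      x = CoprodI.of a * CoprodI.of b * (CoprodI.of a)⁻¹ * (CoprodI.of b)⁻¹}

/-- The graph product of the family of groups `Γ` over the simple graph `G`. -/
def GraphProduct (G : SimpleGraph V) (Γ : V → Type*) [∀ v, Group (Γ v)] : Type _ :=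
  CoprodI Γ ⧸ Subgroup.normalClosure (graphProdRels G Γ)

instance (G : SimpleGraph V) (Γ : V → Type*) [∀ v, Group (Γ v)] :
    Group (GraphProduct G Γ) :=
  inferInstanceAs (Group (CoprodI Γ ⧸ Subgroup.normalClosure (graphProdRels G Γ)))

/-- The canonical map from a vertex group into the graph product. -/
def GraphProduct.of {G : SimpleGraph V} {Γ : V → Type*} [∀ v, Group (Γ v)] (v : V) :
    Γ v →* GraphProduct G Γ :=
  (QuotientGroup.mk' (Subgroup.normalClosure (graphProdRels G Γ))).comp CoprodI.of

/-- The full subgroup of a graph product associated with a set of vertices. -/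
def GraphProduct.full (G : SimpleGraph V) (Γ : V → Type*) [∀ v, Group (Γ v)]
    (U : Set V) : Subgroup (GraphProduct G Γ) :=
  Subgroup.closure (⋃ u ∈ U, Set.range (GraphProduct.of (G := G) (Γ := Γ) u))

/-- The conjugate subgroup `g H g⁻¹`. -/
def conjSub {G : Type*} [Group G] (g : G) (H : Subgroup G) : Subgroup G :=
  Subgroup.map (MulAut.conj g).toMonoidHom H

/-- The common link of a set of vertices. -/
def lkSet (G : SimpleGraph V) (S : Set V) : Set V :=
  ⋂ u ∈ S, G.neighborSet u

/-- A consecutive enumeration of the cliques of a graph in class `CC₁`: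
the cliques are `C 1, ..., C n` (indexed by `ZMod n`, `n ≥ 4`), consecutive cliques
intersect nontrivially, non-consecutive ones are disjoint, and each clique has a
nonempty interior `C i \ (C (i-1) ∪ C (i+1))`. -/
structure ConsecutiveCliques {V : Type*} (G : SimpleGraph V) (n : ℕ) where
  C : ZMod n → Set V
  four_le : 4 ≤ n
  isClique : ∀ i, G.IsClique (C i)
  isMaximal : ∀ i, ∀ s : Set V, G.IsClique s → C i ⊆ s → s = C i
  cliques_covered : ∀ s : Set V, G.IsClique s →
    (∀ t : Set V, G.IsClique t → s ⊆ t → t = s) → ∃ i, s = C i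
  inj : Function.Injective C
  inter_empty : ∀ i j : ZMod n, i ≠ j → i ≠ j + 1 → j ≠ i + 1 → C i ∩ C j = ∅
  inter_nonempty : ∀ i, (C i ∩ C (i + 1)).Nonempty
  int_nonempty : ∀ i, (C i \ (C (i - 1) ∪ C (i + 1))).Nonempty

/-!
Killing the vertex groups of the interior `𝒞ᵢ^int` defines a retraction `ρ` of `Γ` onto
`Γ_{𝒱 ∖ 𝒞ᵢ^int}`, and `ρ` fixes `g h`. Put `a = ρ g`, `b = ρ h`; then `ρ g ρ h = g h` gives
`s := a⁻¹ g = b h⁻¹`, so `s` lies in both `Γ_{𝒞_{i-1} Δ 𝒞ᵢ}` and `Γ_{𝒞ᵢ Δ 𝒞_{i+1}}`.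
Retracting once more shows `Γ_U ∩ Γ_W = Γ_{U ∩ W}`, and `(𝒞_{i-1} Δ 𝒞ᵢ) ∩ (𝒞ᵢ Δ 𝒞_{i+1})`
lies in `𝒞ᵢ^int` because `𝒞_{i-1}` and `𝒞_{i+1}` are disjoint.
-/

namespace GraphProduct

variable {G : SimpleGraph V} {Γ : V → Type*} [∀ v, Group (Γ v)]

theorem of_commute {u w : V} (hadj : G.Adj u w) (a : Γ u) (b : Γ w) :
    Commute (of (G := G) u a) (of w b) := by
  rw [← commutatorElement_eq_one_iff_commute, commutatorElement_def]
  exact (QuotientGroup.eq_one_iff _).mpr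
    (Subgroup.subset_normalClosure ⟨u, w, a, b, hadj, rfl⟩)

def lift {H : Type*} [Group H] (f : ∀ v, Γ v →* H)
    (hf : ∀ u w, G.Adj u w → ∀ (a : Γ u) (b : Γ w), Commute (f u a) (f w b)) :
    GraphProduct G Γ →* H :=
  QuotientGroup.lift _ (CoprodI.lift f) <| Subgroup.normalClosure_le_normal <| by
    rintro _ ⟨u, w, a, b, hadj, rfl⟩
    simp [(hf u w hadj a b).eq]

@[simp]
theorem lift_of {H : Type*} [Group H] (f : ∀ v, Γ v →* H)
    (hf : ∀ u w, G.Adj u w → ∀ (a : Γ u) (b : Γ w), Commute (f u a) (f w b))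
    (v : V) (a : Γ v) : lift f hf (of v a) = f v a :=
  CoprodI.lift_of f a

theorem of_mem_full {U : Set V} {v : V} (hv : v ∈ U) (a : Γ v) :
    of v a ∈ full G Γ U :=
  Subgroup.subset_closure (Set.mem_biUnion hv ⟨a, rfl⟩)

theorem full_mono {U U' : Set V} (h : U ⊆ U') : full G Γ U ≤ full G Γ U' :=
  Subgroup.closure_mono (Set.biUnion_subset_biUnion_left h)

theorem full_le_iff {U : Set V} {H : Subgroup (GraphProduct G Γ)} :
    full G Γ U ≤ H ↔ ∀ v ∈ U, ∀ a : Γ v, of v a ∈ H := by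
  simp [full, Subgroup.closure_le, Set.range_subset_iff]

open Classical in
noncomputable def retract (W : Set V) : GraphProduct G Γ →* GraphProduct G Γ :=
  lift (fun v => if v ∈ W then of v else 1) fun u w hadj a b => by
    split_ifs
    exacts [of_commute hadj a b, Commute.one_right _, Commute.one_left _, Commute.one_left _]

theorem retract_of_mem {W : Set V} {v : V} (hv : v ∈ W) (a : Γ v) :
    retract W (of (G := G) v a) = of v a := by
  simp [retract, hv]

theorem retract_of_notMem {W : Set V} {v : V} (hv : v ∉ W) (a : Γ v) :
    retract W (of (G := G) v a) = 1 := by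
  simp [retract, hv]

theorem retract_mem_full_inter {U W : Set V} {x : GraphProduct G Γ}
    (hx : x ∈ full G Γ U) : retract W x ∈ full G Γ (U ∩ W) := by
  suffices full G Γ U ≤ (full G Γ (U ∩ W)).comap (retract W) from this hx
  refine full_le_iff.mpr fun v hv a => ?_
  by_cases hw : v ∈ W
  · simpa [retract_of_mem hw] using of_mem_full (Set.mem_inter hv hw) a
  · simp [retract_of_notMem hw]

theorem retract_eq_self {W : Set V} {x : GraphProduct G Γ} (hx : x ∈ full G Γ W) :
    retract W x = x := by
  suffices full G Γ W ≤ (retract W).eqLocus (MonoidHom.id _) from this hx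
  exact full_le_iff.mpr fun v hv a => retract_of_mem hv a

theorem mem_full_inter {U W : Set V} {x : GraphProduct G Γ} (hU : x ∈ full G Γ U)
    (hW : x ∈ full G Γ W) : x ∈ full G Γ (U ∩ W) :=
  retract_eq_self hW ▸ retract_mem_full_inter hU

theorem exists_eq_mul_of_mul_mem_full {A B W : Set V} {g h : GraphProduct G Γ}
    (hg : g ∈ full G Γ A) (hh : h ∈ full G Γ B) (hgh : g * h ∈ full G Γ W) :
    ∃ a ∈ full G Γ (A ∩ W), ∃ s ∈ full G Γ (A ∩ B), ∃ b ∈ full G Γ (B ∩ W),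
      g = a * s ∧ h = s⁻¹ * b := by
  set a := retract W g
  set b := retract W h
  have hab : a * b = g * h := by rw [← map_mul]; exact retract_eq_self hgh
  have hsb : a⁻¹ * g = b * h⁻¹ := by
    rw [inv_mul_eq_iff_eq_mul, ← mul_assoc, hab, mul_inv_cancel_right]
  have haA : a ∈ full G Γ A := full_mono Set.inter_subset_left (retract_mem_full_inter hg)
  have hbB : b ∈ full G Γ B := full_mono Set.inter_subset_left (retract_mem_full_inter hh)
  refine ⟨a, retract_mem_full_inter hg, a⁻¹ * g, mem_full_inter (mul_mem (inv_mem haA) hg) ?_,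
    b, retract_mem_full_inter hh, by group, ?_⟩
  · exact hsb ▸ mul_mem hbB (inv_mem hh)
  · rw [hsb]; group

end GraphProduct

theorem ConsecutiveCliques.pred_inter_succ_eq_empty {G : SimpleGraph V} {n : ℕ}
    (cc : ConsecutiveCliques G n) (i : ZMod n) : cc.C (i - 1) ∩ cc.C (i + 1) = ∅ := by
  have hne : ∀ k : ℕ, 0 < k → k < 4 → (k : ZMod n) ≠ 0 := fun k hk0 hk4 hk => by
    have := Nat.le_of_dvd hk0 ((ZMod.natCast_eq_zero_iff k n).mp hk)
    have := cc.four_le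
    omega
  refine cc.inter_empty _ _ (fun h => hne 2 (by norm_num) (by norm_num) ?_)
    (fun h => hne 3 (by norm_num) (by norm_num) ?_) (fun h => hne 1 (by norm_num) (by norm_num) ?_)
  · push_cast; linear_combination -h
  · push_cast; linear_combination -h
  · push_cast; linear_combination h

theorem stmt_8_general {V : Type*} (G : SimpleGraph V) (Γ : V → Type*)
    [∀ v, Group (Γ v)] {n : ℕ} (cc : ConsecutiveCliques G n)
    (i : ZMod n) (g h : GraphProduct G Γ)
    (hg : g ∈ GraphProduct.full G Γ
      ((cc.C (i - 1) ∪ cc.C i) \ (cc.C (i - 1) ∩ cc.C i)))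
    (hh : h ∈ GraphProduct.full G Γ
      ((cc.C i ∪ cc.C (i + 1)) \ (cc.C i ∩ cc.C (i + 1))))
    (hgh : g * h ∈ GraphProduct.full G Γ
      ((cc.C i \ (cc.C (i - 1) ∪ cc.C (i + 1)))ᶜ)) :
    ∃ a ∈ GraphProduct.full G Γ
        ((cc.C (i - 1) \ (cc.C (i - 1) ∩ cc.C i)) ∪ (cc.C i ∩ cc.C (i + 1))),
      ∃ s ∈ GraphProduct.full G Γ (cc.C i \ (cc.C (i - 1) ∪ cc.C (i + 1))),
        ∃ b ∈ GraphProduct.full G Γ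
          ((cc.C (i + 1) \ (cc.C i ∩ cc.C (i + 1))) ∪ (cc.C (i - 1) ∩ cc.C i)),
          g = a * s ∧ h = s⁻¹ * b := by
  obtain ⟨a, ha, s, hs, b, hb, rfl, rfl⟩ := GraphProduct.exists_eq_mul_of_mul_mem_full hg hh hgh
  have hdisj := Set.eq_empty_iff_forall_notMem.mp (cc.pred_inter_succ_eq_empty i)
  refine ⟨a, GraphProduct.full_mono ?_ ha, s, GraphProduct.full_mono ?_ hs, b,
    GraphProduct.full_mono ?_ hb, rfl, rfl⟩
  all_goals
    intro x
    have := hdisj x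
    simp only [Set.mem_inter_iff, Set.mem_sdiff, Set.mem_union, Set.mem_compl_iff] at this ⊢
    tauto

/-- Cancellation: if `g ∈ Γ_{𝒞_{i-1} Δ 𝒞ᵢ}`, `h ∈ Γ_{𝒞ᵢ Δ 𝒞_{i+1}}` and
`g h ∈ Γ_{𝒱 ∖ 𝒞ᵢ^int}`, then `g = a s` and `h = s⁻¹ b` with
`a ∈ Γ_{(𝒞_{i-1}∖𝒞_{i-1,i}) ∪ 𝒞_{i,i+1}}`, `s ∈ Γ_{𝒞ᵢ^int}`,
`b ∈ Γ_{(𝒞_{i+1}∖𝒞_{i,i+1}) ∪ 𝒞_{i-1,i}}`. -/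
theorem stmt_8 {V : Type*} [Fintype V] (G : SimpleGraph V) (Γ : V → Type*)
    [∀ v, Group (Γ v)] [∀ v, Infinite (Γ v)] {n : ℕ} (cc : ConsecutiveCliques G n)
    (i : ZMod n) (g h : GraphProduct G Γ)
    (hg : g ∈ GraphProduct.full G Γ
      ((cc.C (i - 1) ∪ cc.C i) \ (cc.C (i - 1) ∩ cc.C i)))
    (hh : h ∈ GraphProduct.full G Γ
      ((cc.C i ∪ cc.C (i + 1)) \ (cc.C i ∩ cc.C (i + 1))))
    (hgh : g * h ∈ GraphProduct.full G Γ
      ((cc.C i \ (cc.C (i - 1) ∪ cc.C (i + 1)))ᶜ)) :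
    ∃ a ∈ GraphProduct.full G Γ
        ((cc.C (i - 1) \ (cc.C (i - 1) ∩ cc.C i)) ∪ (cc.C i ∩ cc.C (i + 1))),
      ∃ s ∈ GraphProduct.full G Γ (cc.C i \ (cc.C (i - 1) ∪ cc.C (i + 1))),
        ∃ b ∈ GraphProduct.full G Γ
          ((cc.C (i + 1) \ (cc.C i ∩ cc.C (i + 1))) ∪ (cc.C (i - 1) ∩ cc.C i)),
          g = a * s ∧ h = s⁻¹ * b :=
  stmt_8_general G Γ cc i g h hg hh hgh
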